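/- Shift bound for the trace of the positive part: let n be a nonempty finite type, A : Matrix n n ℂ Hermitian, and c ≤ 0 a real number. Then Re(Tr((c • (1 : Matrix n n ℂ) + A)₊)) ≤ max(0, c + Re(Tr(A₊))). -/

import Mathlib

open Matrix

/-! Since `c • 1 + A = cfc (c + ·) A`, both traces are sums over the eigenvalues `λᵢ` of `A`.
Shifting by `c ≤ 0` lowers every positive part; if some `c + λᵢ` is positive, the shift is paid in
full on that term, and otherwise the left-hand side vanishes. -/

/-- The positive part of a matrix, given by the continuous functional calculus
applied to `fun x => max x 0` (for a Hermitian matrix this replaces each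
eigenvalue `x` in the spectral decomposition by `max x 0`). -/
noncomputable def matPosPart {n : Type*} [Fintype n] [DecidableEq n]
    (A : Matrix n n ℂ) : Matrix n n ℂ :=
  cfc (fun x : ℝ => max x 0) A

theorem Finset.sum_max_const_add_zero_le {ι α : Type*} [AddCommGroup α] [LinearOrder α]
    [IsOrderedAddMonoid α] (s : Finset ι) (f : ι → α) {c : α} (hc : c ≤ 0) :
    ∑ i ∈ s, max (c + f i) 0 ≤ max 0 (c + ∑ i ∈ s, max (f i) 0) := by
  classical
  by_cases hneg : ∀ i ∈ s, c + f i ≤ 0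
  · rw [sum_eq_zero fun i hi => max_eq_right (hneg i hi)]
    exact le_max_left _ _
  push Not at hneg
  obtain ⟨i₀, hi₀, hpos⟩ := hneg
  have hshift : ∀ i ∈ s.erase i₀, max (c + f i) 0 ≤ max (f i) 0 :=
    fun i _ => max_le_max_right 0 (add_le_of_nonpos_left hc)
  refine le_max_of_le_right ?_
  rw [← add_sum_erase s _ hi₀, ← add_sum_erase s _ hi₀, max_eq_left hpos.le,
    add_assoc]
  exact add_le_add_right (add_le_add (le_max_left _ _) (sum_le_sum hshift)) c

section ConstAdd

variable {R A : Type*} {p : A → Prop} [CommSemiring R] [StarRing R] [MetricSpace R]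
  [IsTopologicalSemiring R] [ContinuousStar R] [TopologicalSpace A] [Ring A] [StarRing A]
  [Algebra R A] [ContinuousFunctionalCalculus R A p] [ContinuousMap.UniqueHom R A]

lemma cfc_comp_const_add (r : R) (f : R → R) (a : A)
    (hf : ContinuousOn f ((r + ·) '' spectrum R a) := by cfc_cont_tac)
    (ha : p a := by cfc_tac) :
    cfc (f <| r + ·) a = cfc f (algebraMap R A r + a) := by
  rw [cfc_comp' .., cfc_const_add .., cfc_id' ..]

end ConstAdd

lemma Matrix.IsHermitian.trace_cfc {n 𝕜 : Type*} [RCLike 𝕜] [Fintype n] [DecidableEq n]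
    {A : Matrix n n 𝕜} (hA : A.IsHermitian) (f : ℝ → ℝ) :
    (cfc f A).trace = ∑ i, (f (hA.eigenvalues i) : 𝕜) := by
  rw [hA.cfc_eq, IsHermitian.cfc, Unitary.conjStarAlgAut_apply, trace_mul_cycle,
    UnitaryGroup.star_mul_self, one_mul, trace_diagonal]
  rfl

lemma Matrix.IsHermitian.re_trace_matPosPart {n : Type*} [Fintype n] [DecidableEq n]
    {A : Matrix n n ℂ} (hA : A.IsHermitian) :
    (matPosPart A).trace.re = ∑ i, max (hA.eigenvalues i) 0 := by
  simp [matPosPart, hA.trace_cfc]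

theorem trace_posPart_smul_one_add_le
    {n : Type*} [Fintype n] [DecidableEq n]
    (A : Matrix n n ℂ) (hA : A.IsHermitian) (c : ℝ) (hc : c ≤ 0) :
    (matPosPart (c • (1 : Matrix n n ℂ) + A)).trace.re
      ≤ max 0 (c + (matPosPart A).trace.re) := by
  have hshift : matPosPart (c • (1 : Matrix n n ℂ) + A) = cfc (fun x => max (c + x) 0) A := by
    rw [matPosPart, ← Algebra.algebraMap_eq_smul_one, ← cfc_comp_const_add c (fun x => max x 0) A]
  rw [hA.re_trace_matPosPart, hshift, hA.trace_cfc]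
  simpa using Finset.univ.sum_max_const_add_zero_le _ hc
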